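/- Let n be a positive natural number, 0 < μ ≤ ε, ξ > 0, and t ≥ 0. Let φ : ℝ → ℝ be continuous and nonnegative with φ(x) ≤ a₀ + a₁x for all x ∈ ℝ; let p : ℝ → ℝ be Lipschitz continuous with constant L_p and p(0) = 0; let A₀ : ℝⁿ → ℝ be measurable and essentially bounded with ‖A₀‖_{L^∞} ≤ M_A. For k ∈ L²(ℝⁿ) define 𝒫(k)(x) = A₀(x) · exp( t · (∫_{ℝⁿ} φ(k(y)) Γ_μ(x,y) dy) / (∫_{ℝⁿ} φ(k(y)) Γ_ε(x,y) dy + ξ) ) · p(k(x)). Then 𝒫(k) ∈ L²(ℝⁿ) and ‖𝒫(k)‖_{L²(ℝⁿ)} ≤ M_A · exp(t·(ε/μ)ⁿ) · L_p · ‖k‖_{L²(ℝⁿ)}. -/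

import Mathlib

/-!
Since `μ ≤ ε`, the Gaussian kernels satisfy `Γ_μ ≤ (ε/μ)ⁿ Γ_ε` pointwise, so for the nonnegative
density `φ ∘ k` the ratio of the two Gaussian averages is at most `(ε/μ)ⁿ`, and the exponential
factor of `𝒫(k)` is at most `exp (t (ε/μ)ⁿ)`. With `|A₀| ≤ M_A` a.e. and `|p s| ≤ L_p |s|` this
gives `|𝒫(k)| ≤ M_A exp (t (ε/μ)ⁿ) L_p |k|` a.e. The averages are genuine
integrals because `φ` grows at most linearly and `Γ_ν(x, ·) ∈ L¹ ∩ L²`, so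
`φ(k) Γ_ν(x, ·)` is integrable by Cauchy–Schwarz.
-/

open Real MeasureTheory

/-- The Gaussian kernel `Γ_ν(x,y) = (2πν²)^{-n/2} · exp(−‖x−y‖₂²/(2ν²))` on `ℝⁿ`. -/
noncomputable def gaussK (n : ℕ) (ν : ℝ) (x y : EuclideanSpace ℝ (Fin n)) : ℝ :=
  (2 * π * ν ^ 2) ^ (-(n : ℝ) / 2) * Real.exp (-‖x - y‖ ^ 2 / (2 * ν ^ 2))

section Gaussian

variable {V : Type*} [NormedAddCommGroup V] [InnerProductSpace ℝ V] [FiniteDimensional ℝ V]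
  [MeasurableSpace V] [BorelSpace V]

theorem integrable_exp_neg_mul_sq_norm_sub {b : ℝ} (hb : 0 < b) (x : V) :
    Integrable (fun y => rexp (-b * ‖x - y‖ ^ 2)) := by
  have h0 : Integrable (fun v : V => rexp (-b * ‖v‖ ^ 2)) := by
    simpa [Complex.norm_exp, ← Complex.ofReal_pow] using
      (GaussianFourier.integrable_cexp_neg_mul_sq_norm_add (b := (b : ℂ)) (by simpa using hb)
        0 (0 : V)).norm
  simpa only [norm_sub_rev x] using h0.comp_sub_right x

end Gaussian

section Kernel

variable {n : ℕ}

theorem gaussK_nonneg (ν : ℝ) (x y : EuclideanSpace ℝ (Fin n)) : 0 ≤ gaussK n ν x y := by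
  unfold gaussK; positivity

theorem continuous_gaussK (ν : ℝ) :
    Continuous (fun q : EuclideanSpace ℝ (Fin n) × EuclideanSpace ℝ (Fin n) =>
      gaussK n ν q.1 q.2) := by
  unfold gaussK; fun_prop

theorem gaussK_eq_mul_exp (ν : ℝ) (x y : EuclideanSpace ℝ (Fin n)) :
    gaussK n ν x y = (2 * π * ν ^ 2) ^ (-(n : ℝ) / 2) * rexp (-(2 * ν ^ 2)⁻¹ * ‖x - y‖ ^ 2) := by
  rw [gaussK]; congr 2; ring

theorem integrable_gaussK {ν : ℝ} (hν : 0 < ν) (x : EuclideanSpace ℝ (Fin n)) :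
    Integrable (fun y => gaussK n ν x y) := by
  simp_rw [gaussK_eq_mul_exp]
  exact (integrable_exp_neg_mul_sq_norm_sub (by positivity) x).const_mul _

theorem memLp_two_gaussK {ν : ℝ} (hν : 0 < ν) (x : EuclideanSpace ℝ (Fin n)) :
    MemLp (fun y => gaussK n ν x y) 2 := by
  refine (memLp_two_iff_integrable_sq
    ((continuous_gaussK ν).comp (Continuous.prodMk_right x)).aestronglyMeasurable).2 ?_
  have hsq : ∀ y, gaussK n ν x y ^ 2 = ((2 * π * ν ^ 2) ^ (-(n : ℝ) / 2)) ^ 2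
      * rexp (-(2 * (2 * ν ^ 2)⁻¹) * ‖x - y‖ ^ 2) := fun y => by
    rw [gaussK_eq_mul_exp, mul_pow, ← Real.exp_nat_mul]
    congr 2; push_cast; ring
  exact ((integrable_exp_neg_mul_sq_norm_sub (by positivity) x).const_mul _).congr
    (ae_of_all _ fun y => (hsq y).symm)

theorem gaussK_le_mul_gaussK {μ ε : ℝ} (hμ : 0 < μ) (hμε : μ ≤ ε)
    (x y : EuclideanSpace ℝ (Fin n)) :
    gaussK n μ x y ≤ (ε / μ) ^ n * gaussK n ε x y := by
  have hε : 0 < ε := hμ.trans_le hμε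
  have hconst : (2 * π * μ ^ 2) ^ (-(n : ℝ) / 2)
      = (ε / μ) ^ n * (2 * π * ε ^ 2) ^ (-(n : ℝ) / 2) := by
    rw [show 2 * π * μ ^ 2 = (μ / ε) ^ 2 * (2 * π * ε ^ 2) by field_simp,
      Real.mul_rpow (by positivity) (by positivity), ← Real.rpow_natCast (μ / ε) 2,
      ← Real.rpow_mul (by positivity), show ((2 : ℕ) : ℝ) * (-(n : ℝ) / 2) = -(n : ℝ) by
        push_cast; ring, Real.rpow_neg (by positivity), ← Real.inv_rpow (by positivity),
      inv_div, Real.rpow_natCast]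
  rw [gaussK, gaussK, hconst, mul_assoc]
  gcongr _ * (_ * rexp ?_)
  rw [neg_div, neg_div, neg_le_neg_iff]
  gcongr

theorem integral_mul_gaussK_le {μ ε : ℝ} (hμ : 0 < μ) (hμε : μ ≤ ε)
    {f : EuclideanSpace ℝ (Fin n) → ℝ} (hf : 0 ≤ f) {x : EuclideanSpace ℝ (Fin n)}
    (hfi : Integrable (fun y => f y * gaussK n ε x y)) :
    ∫ y, f y * gaussK n μ x y ≤ (ε / μ) ^ n * ∫ y, f y * gaussK n ε x y := by
  rw [← integral_const_mul]
  refine integral_mono_of_nonneg (ae_of_all _ fun y => mul_nonneg (hf y) (gaussK_nonneg μ x y))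
    (hfi.const_mul _) (ae_of_all _ fun y => ?_)
  calc f y * gaussK n μ x y ≤ f y * ((ε / μ) ^ n * gaussK n ε x y) :=
        mul_le_mul_of_nonneg_left (gaussK_le_mul_gaussK hμ hμε x y) (hf y)
    _ = (ε / μ) ^ n * (f y * gaussK n ε x y) := mul_left_comm _ _ _

theorem integral_mul_gaussK_div_le {μ ε ξ : ℝ} (hμ : 0 < μ) (hμε : μ ≤ ε) (hξ : 0 < ξ)
    {f : EuclideanSpace ℝ (Fin n) → ℝ} (hf : 0 ≤ f) {x : EuclideanSpace ℝ (Fin n)}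
    (hfi : Integrable (fun y => f y * gaussK n ε x y)) :
    (∫ y, f y * gaussK n μ x y) / ((∫ y, f y * gaussK n ε x y) + ξ) ≤ (ε / μ) ^ n := by
  have hI : 0 ≤ ∫ y, f y * gaussK n ε x y :=
    integral_nonneg fun y => mul_nonneg (hf y) (gaussK_nonneg ε x y)
  have hc : 0 ≤ (ε / μ) ^ n := by have := hμ.trans_le hμε; positivity
  refine div_le_of_le_mul₀ (by positivity) hc ?_
  calc ∫ y, f y * gaussK n μ x y ≤ (ε / μ) ^ n * ∫ y, f y * gaussK n ε x y :=
        integral_mul_gaussK_le hμ hμε hf hfi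
    _ ≤ (ε / μ) ^ n * ((∫ y, f y * gaussK n ε x y) + ξ) := by gcongr; linarith

end Kernel

section Measure

variable {α β : Type*} [MeasurableSpace α] [MeasurableSpace β]

theorem integrable_mul_of_norm_le_add_mul {μ : Measure α} {f g k : α → ℝ}
    (hf : AEStronglyMeasurable f μ) (hg : Integrable g μ) (hg2 : MemLp g 2 μ) (hk : MemLp k 2 μ)
    {a b : ℝ} (hfk : ∀ y, ‖f y‖ ≤ a + b * ‖k y‖) :
    Integrable (fun y => f y * g y) μ := by
  refine ((hg.norm.const_mul a).add ((hk.integrable_mul hg2).norm.const_mul b)).mono'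
    (hf.mul hg.1) (ae_of_all _ fun y => ?_)
  calc ‖f y * g y‖ = ‖f y‖ * ‖g y‖ := norm_mul _ _
    _ ≤ (a + b * ‖k y‖) * ‖g y‖ := by gcongr; exact hfk y
    _ = a * ‖g y‖ + b * ‖(k * g) y‖ := by rw [Pi.mul_apply, norm_mul]; ring

theorem stronglyMeasurable_integral_mul_kernel {ν : Measure β} [SFinite ν] {f : β → ℝ}
    (hf : AEStronglyMeasurable f ν) {K : α → β → ℝ} (hK : Measurable (Function.uncurry K)) :
    StronglyMeasurable (fun x => ∫ y, f y * K x y ∂ν) := by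
  have hmk : (fun x => ∫ y, f y * K x y ∂ν) = fun x => ∫ y, hf.mk f y * K x y ∂ν :=
    funext fun x => integral_congr_ae (hf.ae_eq_mk.mono fun y hy => by simp only [hy])
  rw [hmk]
  exact ((hf.stronglyMeasurable_mk.comp_measurable measurable_snd).mul
    hK.stronglyMeasurable).integral_prod_right'

end Measure

noncomputable def productivityOperator (n : ℕ) (μ ε ξ t : ℝ) (φ p : ℝ → ℝ)
    (A₀ k : EuclideanSpace ℝ (Fin n) → ℝ) (x : EuclideanSpace ℝ (Fin n)) : ℝ :=
  A₀ x * rexp (t * ((∫ y, φ (k y) * gaussK n μ x y) / ((∫ y, φ (k y) * gaussK n ε x y) + ξ)))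
    * p (k x)

section Operator

variable {n : ℕ} {μ ε ξ t : ℝ} {φ p : ℝ → ℝ} {A₀ k : EuclideanSpace ℝ (Fin n) → ℝ}

theorem aestronglyMeasurable_productivityOperator (hφ : Continuous φ) (hp : Continuous p)
    (hA : AEStronglyMeasurable A₀) (hk : AEStronglyMeasurable k) :
    AEStronglyMeasurable (productivityOperator n μ ε ξ t φ p A₀ k) := by
  have hconv : ∀ ν, Measurable fun x => ∫ y, φ (k y) * gaussK n ν x y := fun ν =>
    (stronglyMeasurable_integral_mul_kernel (hφ.comp_aestronglyMeasurable hk)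
      (continuous_gaussK ν).measurable).measurable
  have hfactor : Measurable fun x => rexp (t * ((∫ y, φ (k y) * gaussK n μ x y) /
      ((∫ y, φ (k y) * gaussK n ε x y) + ξ))) :=
    measurable_exp.comp (((hconv μ).div ((hconv ε).add_const ξ)).const_mul t)
  exact (hA.mul hfactor.aestronglyMeasurable).mul (hp.comp_aestronglyMeasurable hk)

theorem norm_productivityOperator_le (hμ : 0 < μ) (hμε : μ ≤ ε) (hξ : 0 < ξ) (ht : 0 ≤ t)
    (hφ : ∀ s, 0 ≤ φ s) {x : EuclideanSpace ℝ (Fin n)}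
    (hφk : Integrable (fun y => φ (k y) * gaussK n ε x y)) {Lp : ℝ} (hp : ∀ s, |p s| ≤ Lp * |s|)
    {MA : ℝ} (hA : |A₀ x| ≤ MA) :
    ‖productivityOperator n μ ε ξ t φ p A₀ k x‖ ≤ MA * rexp (t * (ε / μ) ^ n) * Lp * ‖k x‖ := by
  have hexp := integral_mul_gaussK_div_le hμ hμε hξ (fun y => hφ (k y)) hφk
  rw [productivityOperator, Real.norm_eq_abs, Real.norm_eq_abs, abs_mul, abs_mul, abs_exp,
    mul_assoc _ Lp]
  have hMA : 0 ≤ MA := (abs_nonneg _).trans hA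
  exact mul_le_mul (mul_le_mul hA (exp_le_exp.2 (mul_le_mul_of_nonneg_left hexp ht))
    (exp_pos _).le hMA) (hp _) (abs_nonneg _) (by positivity)

end Operator

theorem productivity_operator_L2_bound_general (n : ℕ)
    (μ ε ξ t : ℝ) (hμ : 0 < μ) (hμε : μ ≤ ε) (hξ : 0 < ξ) (ht : 0 ≤ t)
    (φ : ℝ → ℝ) (hφc : Continuous φ) (hφ0 : ∀ x, 0 ≤ φ x)
    (a₀ a₁ : ℝ) (hφlin : ∀ x, φ x ≤ a₀ + a₁ * x)
    (p : ℝ → ℝ) (Lp : ℝ)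
    (hp : ∀ x y, |p x - p y| ≤ Lp * |x - y|) (hp0 : p 0 = 0)
    (A₀ : EuclideanSpace ℝ (Fin n) → ℝ) (hA : Measurable A₀)
    (MA : ℝ) (hMA : ∀ᵐ x ∂(volume : Measure (EuclideanSpace ℝ (Fin n))), |A₀ x| ≤ MA)
    (k : EuclideanSpace ℝ (Fin n) → ℝ) (hk : MemLp k 2) :
    MemLp (fun x => A₀ x *
        Real.exp (t * ((∫ y, φ (k y) * gaussK n μ x y) /
          ((∫ y, φ (k y) * gaussK n ε x y) + ξ))) * p (k x)) 2 ∧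
    eLpNorm (fun x => A₀ x *
        Real.exp (t * ((∫ y, φ (k y) * gaussK n μ x y) /
          ((∫ y, φ (k y) * gaussK n ε x y) + ξ))) * p (k x)) 2 volume
      ≤ ENNReal.ofReal (MA * Real.exp (t * (ε / μ) ^ n) * Lp) * eLpNorm k 2 volume := by
  have hε : 0 < ε := hμ.trans_le hμε
  have hφle : ∀ s, ‖φ s‖ ≤ |a₀| + |a₁| * ‖s‖ := fun s => by
    rw [Real.norm_of_nonneg (hφ0 s), Real.norm_eq_abs, ← abs_mul]
    exact (hφlin s).trans (add_le_add (le_abs_self _) (le_abs_self _))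
  have hpc : Continuous p := by
    refine (LipschitzWith.of_dist_le_mul (K := Lp.toNNReal) fun x y => ?_).continuous
    simpa only [Real.dist_eq] using
      (hp x y).trans (mul_le_mul_of_nonneg_right Lp.le_coe_toNNReal (abs_nonneg _))
  have hpk : ∀ s, |p s| ≤ Lp * |s| := fun s => by simpa [hp0] using hp s 0
  have hbound : ∀ᵐ x ∂volume, ‖productivityOperator n μ ε ξ t φ p A₀ k x‖
      ≤ MA * rexp (t * (ε / μ) ^ n) * Lp * ‖k x‖ := by
    filter_upwards [hMA] with x hx
    refine norm_productivityOperator_le hμ hμε hξ ht hφ0 ?_ hpk hx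
    exact integrable_mul_of_norm_le_add_mul (hφc.comp_aestronglyMeasurable hk.1)
      (integrable_gaussK hε x) (memLp_two_gaussK hε x) hk fun y => hφle (k y)
  exact ⟨hk.of_le_mul (aestronglyMeasurable_productivityOperator hφc hpc hA.aestronglyMeasurable
    hk.1) hbound, eLpNorm_le_mul_eLpNorm_of_ae_le_mul hbound 2⟩

/-- Boundedness of the productivity-production operator `𝒫` in `L²(ℝⁿ)`:
`𝒫(k) ∈ L²` and `‖𝒫(k)‖_{L²} ≤ M_A · exp(t(ε/μ)ⁿ) · L_p · ‖k‖_{L²}`. -/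
theorem productivity_operator_L2_bound (n : ℕ) (hn : 0 < n)
    (μ ε ξ t : ℝ) (hμ : 0 < μ) (hμε : μ ≤ ε) (hξ : 0 < ξ) (ht : 0 ≤ t)
    (φ : ℝ → ℝ) (hφc : Continuous φ) (hφ0 : ∀ x, 0 ≤ φ x)
    (a₀ a₁ : ℝ) (hφlin : ∀ x, φ x ≤ a₀ + a₁ * x)
    (p : ℝ → ℝ) (Lp : ℝ) (hLp : 0 ≤ Lp)
    (hp : ∀ x y, |p x - p y| ≤ Lp * |x - y|) (hp0 : p 0 = 0)
    (A₀ : EuclideanSpace ℝ (Fin n) → ℝ) (hA : Measurable A₀)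
    (MA : ℝ) (hMA : ∀ᵐ x ∂(volume : Measure (EuclideanSpace ℝ (Fin n))), |A₀ x| ≤ MA)
    (k : EuclideanSpace ℝ (Fin n) → ℝ) (hk : MemLp k 2) :
    MemLp (fun x => A₀ x *
        Real.exp (t * ((∫ y, φ (k y) * gaussK n μ x y) /
          ((∫ y, φ (k y) * gaussK n ε x y) + ξ))) * p (k x)) 2 ∧
    eLpNorm (fun x => A₀ x *
        Real.exp (t * ((∫ y, φ (k y) * gaussK n μ x y) /
          ((∫ y, φ (k y) * gaussK n ε x y) + ξ))) * p (k x)) 2 volume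
      ≤ ENNReal.ofReal (MA * Real.exp (t * (ε / μ) ^ n) * Lp) * eLpNorm k 2 volume :=
  productivity_operator_L2_bound_general n μ ε ξ t hμ hμε hξ ht φ hφc hφ0 a₀ a₁ hφlin p Lp hp hp0 A₀
    hA MA hMA k hk
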